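/- arXiv:2312.15586 — 3 statements merged into one kernel-verified Lean document; each statement's English description precedes it below -/
import Mathlib

section
/- Let Λ be a finite dimensional algebra over an algebraically closed field and M a finitely generated Λ-module with minimal projective presentation P₁ → P₀ → M → 0 given by f : P₁ → P₀. Then M is τ-rigid (i.e., Hom_Λ(M, τM) = 0) if and only if the induced map Hom_Λ(P₀, M) → Hom_Λ(P₁, M) is surjective. -/
set_option linter.unusedSectionVars false
set_option linter.unusedVariables false
set_option maxHeartbeats 1000000

open Function LinearMap MulOpposite

noncomputable section

/-- A submodule `N ≤ P` is superfluous (small) if any complement generating together with it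
the whole module must itself be the whole module. -/
def IsSuperfluous (R : Type) [Ring R] {P : Type} [AddCommGroup P] [Module R P]
    (N : Submodule R P) : Prop :=
  ∀ N' : Submodule R P, N ⊔ N' = ⊤ → N' = ⊤

/-- `P₁ →f P₀ →g M → 0` is a minimal projective presentation. -/
structure IsMinimalProjPresentation {R : Type} [Ring R] {P₁ P₀ M : Type}
    [AddCommGroup P₁] [AddCommGroup P₀] [AddCommGroup M]
    [Module R P₁] [Module R P₀] [Module R M]
    (f : P₁ →ₗ[R] P₀) (g : P₀ →ₗ[R] M) : Prop where
  projective₁ : Module.Projective R P₁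
  projective₀ : Module.Projective R P₀
  finite₁ : Module.Finite R P₁
  finite₀ : Module.Finite R P₀
  surjective : Surjective g
  exact : LinearMap.range f = LinearMap.ker g
  superfluous₀ : IsSuperfluous R (LinearMap.ker g)
  superfluous₁ : IsSuperfluous R (LinearMap.ker f)

/-- A finitely generated module is Gorenstein projective if it is (isomorphic to) a syzygy of a
complete exact sequence of finitely generated projective modules which stays exact under
`Hom(-, R)`. -/
def IsGorensteinProjective (R : Type) [Ring R] (M : Type) [AddCommGroup M] [Module R M] : Prop :=
  ∃ (P : ℤ → ModuleCat.{0} R) (d : ∀ i, P i →ₗ[R] P (i + 1)),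
    (∀ i, Module.Projective R (P i)) ∧ (∀ i, Module.Finite R (P i)) ∧
    (∀ i, LinearMap.range (d i) = LinearMap.ker (d (i + 1))) ∧
    (∀ i (φ : P (i + 1) →ₗ[R] R), φ.comp (d i) = 0 →
      ∃ ψ : P (i + 1 + 1) →ₗ[R] R, φ = ψ.comp (d (i + 1))) ∧
    Nonempty (M ≃ₗ[R] LinearMap.range (d 0))

/-- A projective resolution `⋯ → P₁ → P₀ → M → 0` by finitely generated projectives. -/
structure ProjResolution (R : Type) [Ring R] (M : Type) [AddCommGroup M] [Module R M] where
  P : ℕ → ModuleCat.{0} R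
  d : ∀ i, P (i + 1) →ₗ[R] P i
  aug : P 0 →ₗ[R] M
  projective : ∀ i, Module.Projective R (P i)
  finite : ∀ i, Module.Finite R (P i)
  surjective : Surjective aug
  exact₀ : LinearMap.range (d 0) = LinearMap.ker aug
  exact : ∀ i, LinearMap.range (d (i + 1)) = LinearMap.ker (d i)

/-- Projective dimension at most `n`. -/
def ProjDimLE (R : Type) [Ring R] (M : Type) [AddCommGroup M] [Module R M] (n : ℕ) : Prop :=
  ∃ res : ProjResolution R M, ∀ i, n < i → Subsingleton (res.P i)

/-- `M` is semi-Gorenstein projective: `Ext^i(M, R) = 0` for all `i ≥ 1`, expressed as exactness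
of the dual of any projective resolution in all positive degrees. -/
def IsSemiGorensteinProjective (R : Type) [Ring R] (M : Type) [AddCommGroup M] [Module R M] :
    Prop :=
  ∀ res : ProjResolution R M, ∀ i (φ : res.P (i + 1) →ₗ[R] R),
    φ.comp (res.d (i + 1)) = 0 → ∃ ψ : res.P i →ₗ[R] R, φ = ψ.comp (res.d i)

/-- An injective coresolution `0 → N → I⁰ → I¹ → ⋯`. -/
structure InjCoresolution (R : Type) [Ring R] (N : Type) [AddCommGroup N] [Module R N] where
  I : ℕ → ModuleCat.{0} R
  aug : N →ₗ[R] I 0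
  d : ∀ i, I i →ₗ[R] I (i + 1)
  injective : ∀ i, Module.Injective R (I i)
  mono : Injective aug
  exact₀ : LinearMap.range aug = LinearMap.ker (d 0)
  exact : ∀ i, LinearMap.range (d i) = LinearMap.ker (d (i + 1))

/-- Injective dimension at most `n`. -/
def InjDimLE (R : Type) [Ring R] (N : Type) [AddCommGroup N] [Module R N] (n : ℕ) : Prop :=
  ∃ c : InjCoresolution R N, ∀ i, n < i → Subsingleton (c.I i)

/-- A Gorenstein ring: finite self-injective dimension on both sides. -/
def IsGorensteinRing (R : Type) [Ring R] : Prop :=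
  ∃ n, InjDimLE R R n ∧ InjDimLE Rᵐᵒᵖ Rᵐᵒᵖ n

/-- Indecomposability: nontrivial, and no nontrivial idempotent endomorphism. -/
def IsIndecomposable (R : Type) [Ring R] (M : Type) [AddCommGroup M] [Module R M] : Prop :=
  Nontrivial M ∧ ∀ e : M →ₗ[R] M, e.comp e = e → e = 0 ∨ e = LinearMap.id

/-- `Z` is a direct summand of `M`. -/
def IsDirectSummand (R : Type) [Ring R] (Z M : Type) [AddCommGroup Z] [AddCommGroup M]
    [Module R Z] [Module R M] : Prop :=
  ∃ (i : Z →ₗ[R] M) (p : M →ₗ[R] Z), p.comp i = LinearMap.id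

/-- `X` lies in `add E`: it is a direct summand of a finite direct sum of copies of `E`. -/
def IsInAdd (R : Type) [Ring R] (E X : Type) [AddCommGroup E] [AddCommGroup X]
    [Module R E] [Module R X] : Prop :=
  ∃ n : ℕ, IsDirectSummand R X (Fin n → E)

end
open Function LinearMap MulOpposite
noncomputable section

section Transpose
variable {R : Type} [Ring R]
variable {P₁ P₀ : Type} [AddCommGroup P₁] [AddCommGroup P₀] [Module R P₁] [Module R P₀]

/-- The map `Hom_R(P₀, R) → Hom_R(P₁, R)` given by precomposition with `f`. -/
def transposeHomMap (f : P₁ →ₗ[R] P₀) : (P₀ →ₗ[R] R) →ₗ[Rᵐᵒᵖ] (P₁ →ₗ[R] R) where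
  toFun g := g.comp f
  map_add' g h := by ext x; simp
  map_smul' a g := rfl

/-- The (Auslander–Bridger) transpose of `M` with respect to a projective presentation
`P₁ →f P₀ → M → 0`: the cokernel of `Hom(f, R)`, a right `R`-module. -/
abbrev TransposeOf (f : P₁ →ₗ[R] P₀) : Type :=
  (P₁ →ₗ[R] R) ⧸ LinearMap.range (transposeHomMap f)

end Transpose

section Dual
/-- The `K`-linear dual of a right `R`-module, regarded as a left `R`-module. -/
abbrev RightDual (K R N : Type) [Field K] [Ring R] [Algebra K R]
    [AddCommGroup N] [Module K N] [Module Rᵐᵒᵖ N] [SMulCommClass Rᵐᵒᵖ K N] : Type := N →ₗ[K] K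

variable (K R N : Type) [Field K] [Ring R] [Algebra K R]
  [AddCommGroup N] [Module K N] [Module Rᵐᵒᵖ N] [SMulCommClass Rᵐᵒᵖ K N]

variable {R N} in
/-- Right scalar multiplication by `a : R` on `N`, as a `K`-linear map. -/
def opSmulHom (a : R) : N →ₗ[K] N where
  toFun x := op a • x
  map_add' x y := smul_add _ x y
  map_smul' c x := smul_comm (op a) c x

instance : SMul R (RightDual K R N) :=
  ⟨fun a φ => (φ : N →ₗ[K] K).comp (opSmulHom (K := K) a)⟩

instance : Module R (RightDual K R N) :=
  Module.ofMinimalAxioms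
    (fun a φ ψ => by apply LinearMap.ext; intro x; rfl)
    (fun a b φ => by
      apply LinearMap.ext; intro x
      show φ (op (a + b) • x) = φ (op a • x) + φ (op b • x)
      rw [op_add, add_smul, map_add])
    (fun a b φ => by
      apply LinearMap.ext; intro x
      show φ (op (a * b) • x) = φ (op b • op a • x)
      rw [op_mul, mul_smul])
    (fun φ => by
      apply LinearMap.ext; intro x
      show φ (op (1 : R) • x) = φ x
      rw [op_one, one_smul])

end Dual

section Tau
variable (K : Type) [Field K] (R : Type) [Ring R] [Algebra K R]

/-- The Auslander–Reiten translate `τM = D Tr M` of `M` with respect to the projective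
presentation `P₁ →f P₀ → M → 0`. -/
abbrev TauOf {P₁ P₀ : Type} [AddCommGroup P₁] [AddCommGroup P₀] [Module R P₁] [Module R P₀]
    (f : P₁ →ₗ[R] P₀) : Type :=
  RightDual K R (TransposeOf f)

/-- `M` is τ-rigid: `Hom_R(M, τM) = 0` for the AR translate computed from any (equivalently, some)
minimal projective presentation of `M`. -/
def IsTauRigid (M : Type) [AddCommGroup M] [Module R M] : Prop :=
  ∀ (P₁ P₀ : ModuleCat.{0} R) (f : P₁ →ₗ[R] P₀) (g : P₀ →ₗ[R] M),
    IsMinimalProjPresentation f g → ∀ h : M →ₗ[R] TauOf K R f, h = 0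

end Tau

/-! Since `Hom(P, Λ) ⊗_Λ M ≅ Hom(P, M)` for finitely generated projective `P`, tensoring
`Hom(P₀, Λ) → Hom(P₁, Λ) → Tr M → 0` with `M` identifies `Tr M ⊗_Λ M` with the cokernel of
`Hom(P₀, M) → Hom(P₁, M)`, and `Hom(M, D Tr M) ≅ D(Tr M ⊗_Λ M)`; so `M` is τ-rigid iff that
cokernel vanishes. Both directions are made explicit with a dual basis `(xᵢ, aᵢ)` of `P₁`:
`φ : M → D Tr M` gives the functional `ψ ↦ ∑ᵢ φ (ψ xᵢ) [aᵢ]` on `Hom(P₁, M)`, which kills the maps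
factoring through `f` and sends `α.smulRight m` to `φ m [α]`; conversely a functional `ξ` on the
cokernel gives `φ m [α] := ξ [α.smulRight m]`. -/

section DualBasis
variable {R P M : Type} [Ring R] [AddCommGroup P] [Module R P] [AddCommGroup M] [Module R M]

theorem Module.Projective.exists_dual_basis [Module.Projective R P] [Module.Finite R P] :
    ∃ (n : ℕ) (x : Fin n → P) (a : Fin n → P →ₗ[R] R), ∀ p, ∑ i, a i p • x i = p := by
  obtain ⟨n, s, hs⟩ := Module.Finite.exists_fin' R P
  obtain ⟨j, hj⟩ := Module.projective_lifting_property s LinearMap.id hs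
  refine ⟨n, fun i => s fun k => if i = k then 1 else 0, fun i => LinearMap.proj i ∘ₗ j,
    fun p => ?_⟩
  simpa [← LinearMap.pi_apply_eq_sum_univ] using LinearMap.congr_fun hj p

variable {n : ℕ} {x : Fin n → P} {a : Fin n → P →ₗ[R] R}

theorem sum_smulRight_eq_of_dual_basis (hxa : ∀ p, ∑ i, a i p • x i = p) (ψ : P →ₗ[R] M) :
    ∑ i, (a i).smulRight (ψ (x i)) = ψ := by
  ext p
  conv_rhs => rw [← hxa p]
  simp

theorem sum_op_smul_eq_of_dual_basis (hxa : ∀ p, ∑ i, a i p • x i = p) (α : P →ₗ[R] R) :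
    ∑ i, op (α (x i)) • a i = α := by
  conv_rhs => rw [← sum_smulRight_eq_of_dual_basis hxa α]
  rfl

end DualBasis

section TauPairing
variable {K Λ : Type} [Field K] [Ring Λ] [Algebra K Λ]
  {M P₁ P₀ : Type} [AddCommGroup M] [Module Λ M]
  [AddCommGroup P₁] [Module Λ P₁] [AddCommGroup P₀] [Module Λ P₀] {f : P₁ →ₗ[Λ] P₀}

theorem tauOf_apply_smul (φ : M →ₗ[Λ] TauOf K Λ f) (c : Λ) (m : M) (t : TransposeOf f) :
    φ (c • m) t = φ m (op c • t) := by
  rw [map_smul]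
  rfl

theorem transposeOf_mk_comp_eq_zero (β : P₀ →ₗ[Λ] Λ) :
    (Submodule.Quotient.mk (β ∘ₗ f) : TransposeOf f) = 0 :=
  (Submodule.Quotient.mk_eq_zero _).2 ⟨β, rfl⟩

/-- The image of `φ` under `Hom(M, D Tr M) ≅ D(Tr M ⊗ M)`, with `Tr M ⊗ M` read as a quotient of
`Hom(P₁, M)` through a dual basis `(xᵢ, aᵢ)` of `P₁`. -/
def tauPairing (φ : M →ₗ[Λ] TauOf K Λ f) {n : ℕ} (x : Fin n → P₁) (a : Fin n → P₁ →ₗ[Λ] Λ) :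
    (P₁ →ₗ[Λ] M) →+ K where
  toFun ψ := ∑ i, φ (ψ (x i)) (Submodule.Quotient.mk (a i))
  map_zero' := by simp
  map_add' ψ ψ' := by simp [Finset.sum_add_distrib]

variable {n : ℕ} {x : Fin n → P₁} {a : Fin n → P₁ →ₗ[Λ] Λ}

theorem tauPairing_smulRight (φ : M →ₗ[Λ] TauOf K Λ f) (hxa : ∀ p, ∑ i, a i p • x i = p)
    (α : P₁ →ₗ[Λ] Λ) (m : M) :
    tauPairing φ x a (α.smulRight m) = φ m (Submodule.Quotient.mk α) := by
  conv_rhs => rw [← sum_op_smul_eq_of_dual_basis hxa α]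
  simp only [tauPairing, AddMonoidHom.coe_mk, ZeroHom.coe_mk, LinearMap.smulRight_apply,
    tauOf_apply_smul]
  simp only [← Submodule.mkQ_apply, map_sum, map_smul]

theorem tauPairing_comp_eq_zero (φ : M →ₗ[Λ] TauOf K Λ f) (hxa : ∀ p, ∑ i, a i p • x i = p)
    {n₀ : ℕ} {y : Fin n₀ → P₀} {b : Fin n₀ → P₀ →ₗ[Λ] Λ} (hyb : ∀ p, ∑ j, b j p • y j = p)
    (ψ₀ : P₀ →ₗ[Λ] M) : tauPairing φ x a (ψ₀ ∘ₗ f) = 0 := by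
  have hψ₀f : ψ₀ ∘ₗ f = ∑ j, (b j ∘ₗ f).smulRight (ψ₀ (y j)) := by
    conv_lhs => rw [← sum_smulRight_eq_of_dual_basis hyb ψ₀]
    ext; simp
  simp [hψ₀f, tauPairing_smulRight φ hxa, transposeOf_mk_comp_eq_zero]

theorem tauOf_eq_zero_of_surjective_comp
    [Module.Projective Λ P₁] [Module.Finite Λ P₁] [Module.Projective Λ P₀] [Module.Finite Λ P₀]
    (hf : Surjective fun ψ : P₀ →ₗ[Λ] M => ψ ∘ₗ f) (φ : M →ₗ[Λ] TauOf K Λ f) : φ = 0 := by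
  obtain ⟨n, x, a, hxa⟩ := Module.Projective.exists_dual_basis (R := Λ) (P := P₁)
  obtain ⟨n₀, y, b, hyb⟩ := Module.Projective.exists_dual_basis (R := Λ) (P := P₀)
  refine LinearMap.ext fun m => LinearMap.ext fun t => ?_
  obtain ⟨α, rfl⟩ := Submodule.Quotient.mk_surjective _ t
  obtain ⟨ψ₀, hψ₀⟩ := hf (α.smulRight m)
  rw [← tauPairing_smulRight φ hxa, ← hψ₀, tauPairing_comp_eq_zero φ hxa hyb]
  rfl

end TauPairing

section TauOfFunctional
variable {K Λ : Type} [Field K] [Ring Λ] [Algebra K Λ]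
  {M P₁ P₀ : Type} [AddCommGroup M] [Module Λ M] [Module K M] [IsScalarTower K Λ M]
  [AddCommGroup P₁] [Module Λ P₁] [AddCommGroup P₀] [Module Λ P₀] {f : P₁ →ₗ[Λ] P₀}

/-- `[α] ↦ ξ [α.smulRight m]`, well defined since `(β ∘ f).smulRight m = β.smulRight m ∘ f`. -/
def transposeOfFunctional (ξ : ((P₁ →ₗ[Λ] M) ⧸ range (lcomp K M f)) →ₗ[K] K) (m : M) :
    TransposeOf f →ₗ[K] K :=
  ((range (transposeHomMap f)).restrictScalars K).liftQ
      (ξ ∘ₗ Submodule.mkQ _ ∘ₗ compRight K (toSpanSingleton Λ M m)) (by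
        rintro _ ⟨β, rfl⟩
        have : compRight K (toSpanSingleton Λ M m) (transposeHomMap f β) ∈ range (lcomp K M f) :=
          ⟨toSpanSingleton Λ M m ∘ₗ β, rfl⟩
        rw [LinearMap.mem_ker, LinearMap.comp_apply, LinearMap.comp_apply, Submodule.mkQ_apply,
          (Submodule.Quotient.mk_eq_zero _).2 this, map_zero]) ∘ₗ
    (Submodule.Quotient.restrictScalarsEquiv K _).symm.toLinearMap

theorem transposeOfFunctional_mk (ξ : ((P₁ →ₗ[Λ] M) ⧸ range (lcomp K M f)) →ₗ[K] K) (m : M)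
    (α : P₁ →ₗ[Λ] Λ) :
    transposeOfFunctional ξ m (Submodule.Quotient.mk α) =
      ξ (Submodule.Quotient.mk (α.smulRight m)) :=
  rfl

def tauOfFunctional (ξ : ((P₁ →ₗ[Λ] M) ⧸ range (lcomp K M f)) →ₗ[K] K) :
    M →ₗ[Λ] TauOf K Λ f where
  toFun := transposeOfFunctional ξ
  map_add' m m' := LinearMap.ext fun t => Submodule.Quotient.induction_on _ t fun α => by
    have : α.smulRight (m + m') = α.smulRight m + α.smulRight m' := by ext; simp [smul_add]
    simp [transposeOfFunctional_mk, this]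
  map_smul' c m := LinearMap.ext fun t => Submodule.Quotient.induction_on _ t fun α => by
    show _ = transposeOfFunctional ξ m (op c • Submodule.Quotient.mk α)
    rw [← Submodule.Quotient.mk_smul, transposeOfFunctional_mk, transposeOfFunctional_mk]
    congr 2
    ext p
    simp [mul_smul]

theorem surjective_comp_of_tauOf_eq_zero [Module.Projective Λ P₁] [Module.Finite Λ P₁]
    (h : ∀ φ : M →ₗ[Λ] TauOf K Λ f, φ = 0) : Surjective fun ψ : P₀ →ₗ[Λ] M => ψ ∘ₗ f := by
  obtain ⟨n, x, a, hxa⟩ := Module.Projective.exists_dual_basis (R := Λ) (P := P₁)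
  suffices Surjective (lcomp K M f) from this
  refine range_eq_top.1 <| Submodule.eq_top_iff'.2 fun ψ => (Submodule.Quotient.mk_eq_zero _).1 ?_
  refine (Module.forall_dual_apply_eq_zero_iff K _).1 fun ξ => ?_
  rw [← sum_smulRight_eq_of_dual_basis hxa ψ, ← Submodule.mkQ_apply, map_sum, map_sum]
  refine Finset.sum_eq_zero fun i _ => ?_
  rw [Submodule.mkQ_apply, ← transposeOfFunctional_mk]
  exact LinearMap.congr_fun (LinearMap.congr_fun (h (tauOfFunctional ξ)) _) _

end TauOfFunctional

variable (K : Type) [Field K] [IsAlgClosed K]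
variable (Λ : Type) [Ring Λ] [Algebra K Λ] [FiniteDimensional K Λ]

theorem stmt0 (M P₁ P₀ : Type) [AddCommGroup M] [Module Λ M]
    [AddCommGroup P₁] [Module Λ P₁] [AddCommGroup P₀] [Module Λ P₀]
    (f : P₁ →ₗ[Λ] P₀) (g : P₀ →ₗ[Λ] M) (hpres : IsMinimalProjPresentation f g) :
    (∀ φ : M →ₗ[Λ] TauOf K Λ f, φ = 0) ↔
      Function.Surjective (fun ψ : P₀ →ₗ[Λ] M => ψ.comp f) := by
  have := hpres.projective₁
  have := hpres.finite₁
  have := hpres.projective₀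
  have := hpres.finite₀
  let : Module K M := Module.compHom M (algebraMap K Λ)
  have : IsScalarTower K Λ M := IsScalarTower.of_algebraMap_smul fun _ _ => rfl
  exact ⟨surjective_comp_of_tauOf_eq_zero, tauOf_eq_zero_of_surjective_comp⟩
end
end

section
/- Let Λ be a finite dimensional algebra, E a generator in Λ-mod, and M an E-rigid module with minimal add E-presentation E₁ →^{f₁} E₀ →^{f₀} M → 0. Then E₀ and E₁ have no nonzero direct summand in common. -/
set_option linter.unusedSectionVars false
set_option linter.unusedVariables false
set_option maxHeartbeats 1000000

open Function LinearMap MulOpposite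

open Function LinearMap MulOpposite
noncomputable section

section ESection
variable (R : Type) [Ring R] (E : Type) [AddCommGroup E] [Module R E]

/-- `E` is a generator of `R`-mod: `R ∈ add E`. -/
def IsGenerator : Prop := IsInAdd R E R

/-- `E₁ →f₁ E₀ →f₀ M → 0` is a minimal `add E`-presentation: each `fᵢ` is a minimal right
`add E`-approximation of its image. -/
structure IsMinimalAddEPresentation {E₁ E₀ M : Type}
    [AddCommGroup E₁] [AddCommGroup E₀] [AddCommGroup M]
    [Module R E₁] [Module R E₀] [Module R M]
    (f₁ : E₁ →ₗ[R] E₀) (f₀ : E₀ →ₗ[R] M) : Prop where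
  mem₁ : IsInAdd R E E₁
  mem₀ : IsInAdd R E E₀
  surjective : Surjective f₀
  exact : LinearMap.range f₁ = LinearMap.ker f₀
  approx₀ : ∀ (X : ModuleCat.{0} R), IsInAdd R E X →
    ∀ g : X →ₗ[R] M, ∃ h : X →ₗ[R] E₀, f₀.comp h = g
  approx₁ : ∀ (X : ModuleCat.{0} R), IsInAdd R E X →
    ∀ g : X →ₗ[R] E₀, LinearMap.range g ≤ LinearMap.range f₁ →
      ∃ h : X →ₗ[R] E₁, f₁.comp h = g
  minimal₀ : ∀ h : E₀ →ₗ[R] E₀, f₀.comp h = f₀ → Bijective h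
  minimal₁ : ∀ h : E₁ →ₗ[R] E₁, f₁.comp h = f₁ → Bijective h

/-- `M` is `E`-rigid: for a minimal `add E`-presentation `E₁ →f₁ E₀ → M → 0`, the map
`Hom(f₁, M)` is surjective. -/
def IsERigid (M : Type) [AddCommGroup M] [Module R M] : Prop :=
  ∀ (E₁ E₀ : ModuleCat.{0} R) (f₁ : E₁ →ₗ[R] E₀) (f₀ : E₀ →ₗ[R] M),
    IsMinimalAddEPresentation R E f₁ f₀ →
      ∀ g : E₁ →ₗ[R] M, ∃ h : E₀ →ₗ[R] M, h.comp f₁ = g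

/-- `M` is `E`-Gorenstein projective: a syzygy of a complete exact sequence with terms in
`add E` which stays exact under both `Hom(-, E)` and `Hom(E, -)`. -/
def IsEGorensteinProjective (M : Type) [AddCommGroup M] [Module R M] : Prop :=
  ∃ (P : ℤ → ModuleCat.{0} R) (d : ∀ i, P i →ₗ[R] P (i + 1)),
    (∀ i, IsInAdd R E (P i)) ∧
    (∀ i, LinearMap.range (d i) = LinearMap.ker (d (i + 1))) ∧
    (∀ i (φ : P (i + 1) →ₗ[R] E), φ.comp (d i) = 0 →
      ∃ ψ : P (i + 1 + 1) →ₗ[R] E, φ = ψ.comp (d (i + 1))) ∧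
    (∀ i (φ : E →ₗ[R] P (i + 1)), (d (i + 1)).comp φ = 0 →
      ∃ ψ : E →ₗ[R] P i, φ = (d i).comp ψ) ∧
    Nonempty (M ≃ₗ[R] LinearMap.range (d 0))

/-- The opposite endomorphism ring `Γ = (End_R E)ᵒᵖ`. -/
abbrev EndOpRing : Type := (Module.End R E)ᵐᵒᵖ

/-- `Hom_R(E, M)` as a left module over `Γ = (End_R E)ᵒᵖ`. -/
abbrev HomE (M : Type) [AddCommGroup M] [Module R M] : Type := E →ₗ[R] M

instance (M : Type) [AddCommGroup M] [Module R M] : SMul (EndOpRing R E) (HomE R E M) :=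
  ⟨fun a φ => (φ : E →ₗ[R] M).comp (unop a)⟩

instance (M : Type) [AddCommGroup M] [Module R M] : Module (EndOpRing R E) (HomE R E M) :=
  Module.ofMinimalAxioms
    (fun a φ ψ => by apply LinearMap.ext; intro x; rfl)
    (fun a b φ => by
      apply LinearMap.ext; intro x
      show φ ((unop (a + b)) x) = φ ((unop a) x) + φ ((unop b) x)
      rw [unop_add]; exact map_add φ _ _)
    (fun a b φ => by
      apply LinearMap.ext; intro x
      show φ ((unop (a * b)) x) = φ ((unop b) ((unop a) x))
      rw [unop_mul]; rfl)
    (fun φ => by apply LinearMap.ext; intro x; rfl)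

/-- The map `Hom_R(E, M) → Hom_R(E, N)` induced by `u : M → N`, as a `Γ`-linear map. -/
def homEMap {M N : Type} [AddCommGroup M] [AddCommGroup N] [Module R M] [Module R N]
    (u : M →ₗ[R] N) : HomE R E M →ₗ[EndOpRing R E] HomE R E N where
  toFun φ := u.comp (φ : E →ₗ[R] M)
  map_add' φ ψ := by apply LinearMap.ext; intro x; simp
  map_smul' a φ := rfl

/-- `Λ` is CM-`E`-free: every finitely generated indecomposable `E`-Gorenstein projective
`E`-rigid module lies in `add E`. -/
def IsCMEFree : Prop :=
  ∀ (M : ModuleCat.{0} R), Module.Finite R M → IsIndecomposable R M →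
    IsEGorensteinProjective R E M → IsERigid R E M → IsInAdd R E M

end ESection


variable (K : Type) [Field K] [IsAlgClosed K]
variable (Λ : Type) [Ring Λ] [Algebra K Λ] [FiniteDimensional K Λ]

section AuxSwap
variable {R : Type} [Ring R] {X Y : Type} [AddCommGroup X] [AddCommGroup Y]
  [Module R X] [Module R Y]

lemma bijective_one_sub_swap (a : X →ₗ[R] Y) (b : Y →ₗ[R] X)
    (h : Bijective (LinearMap.id - a.comp b : Y →ₗ[R] Y)) :
    Bijective (LinearMap.id - b.comp a : X →ₗ[R] X) := by
  set e : Y ≃ₗ[R] Y := LinearEquiv.ofBijective _ h with he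
  have hes : ∀ y : Y, e.symm y - a (b (e.symm y)) = y := by
    intro y
    have h0 : (LinearMap.id - a.comp b : Y →ₗ[R] Y) (e.symm y) = y := e.apply_symm_apply y
    simp only [LinearMap.sub_apply, LinearMap.comp_apply, LinearMap.id_apply] at h0
    exact h0
  have hse : ∀ y : Y, e.symm (y - a (b y)) = y := by
    intro y
    have h0 : e.symm ((LinearMap.id - a.comp b : Y →ₗ[R] Y) y) = y := e.symm_apply_apply y
    simp only [LinearMap.sub_apply, LinearMap.comp_apply, LinearMap.id_apply] at h0
    exact h0
  have hw1 : ∀ x : X, x - b (a x) + b (e.symm (a (x - b (a x)))) = x := by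
    intro x
    rw [map_sub a, hse]
    abel
  have hw2 : ∀ x : X, (x + b (e.symm (a x))) - b (a (x + b (e.symm (a x)))) = x := by
    intro x
    rw [map_add a, map_add b]
    have hkey := congrArg b (hes (a x))
    rw [map_sub b] at hkey
    rw [← hkey]
    abel
  constructor
  · intro x₁ x₂ hx
    simp only [LinearMap.sub_apply, LinearMap.comp_apply, LinearMap.id_apply] at hx
    have h1 := hw1 x₁
    rw [hx] at h1
    exact h1.symm.trans (hw1 x₂)
  · intro x
    refine ⟨x + b (e.symm (a x)), ?_⟩
    simp only [LinearMap.sub_apply, LinearMap.comp_apply, LinearMap.id_apply]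
    exact hw2 x

end AuxSwap

theorem stmt8 (E : Type) [AddCommGroup E] [Module Λ E] [Module.Finite Λ E]
    (hgen : IsGenerator Λ E)
    (M E₁ E₀ : Type) [AddCommGroup M] [Module Λ M] [Module.Finite Λ M]
    [AddCommGroup E₁] [Module Λ E₁] [AddCommGroup E₀] [Module Λ E₀]
    (f₁ : E₁ →ₗ[Λ] E₀) (f₀ : E₀ →ₗ[Λ] M)
    (hpres : IsMinimalAddEPresentation Λ E f₁ f₀) (hrig : IsERigid Λ E M) :
    ∀ (Z : ModuleCat.{0} Λ), Nontrivial Z →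
      IsDirectSummand Λ Z E₀ → IsDirectSummand Λ Z E₁ → False := by
  rintro Z hZ ⟨i₀, p₀, hp₀⟩ ⟨i₁, p₁, hp₁⟩
  have hp₀' : ∀ z : Z, p₀ (i₀ z) = z := by
    intro z
    have := congrArg (fun φ => φ z) hp₀
    simpa using this
  have hp₁' : ∀ z : Z, p₁ (i₁ z) = z := by
    intro z
    have := congrArg (fun φ => φ z) hp₁
    simpa using this
  have hf01 : ∀ y : E₁, f₀ (f₁ y) = 0 := by
    intro y
    have hy : f₁ y ∈ LinearMap.range f₁ := ⟨y, rfl⟩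
    rw [hpres.exact] at hy
    exact hy
  -- `f₁` is radical: `1 - f₁ ∘ c` is bijective for every `c`
  have L : ∀ c : E₀ →ₗ[Λ] E₁, Bijective (LinearMap.id - f₁.comp c : E₀ →ₗ[Λ] E₀) := by
    intro c
    apply hpres.minimal₀
    apply LinearMap.ext
    intro x
    simp [LinearMap.sub_apply, LinearMap.comp_apply, map_sub, hf01]
  have L' : ∀ c : E₀ →ₗ[Λ] E₁, Bijective (LinearMap.id - c.comp f₁ : E₁ →ₗ[Λ] E₁) := by
    intro c
    exact bijective_one_sub_swap f₁ c (L c)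
  -- rigidity and approximations
  obtain ⟨h, hh⟩ := hrig (ModuleCat.of Λ E₁) (ModuleCat.of Λ E₀) f₁ f₀ hpres
    (f₀ ∘ₗ (i₀ ∘ₗ p₁))
  obtain ⟨k, hk⟩ := hpres.approx₀ (ModuleCat.of Λ E₀) hpres.mem₀ h
  have hrange : LinearMap.range ((k ∘ₗ f₁) - (i₀ ∘ₗ p₁)) ≤ LinearMap.range f₁ := by
    rw [hpres.exact]
    rintro x ⟨y, rfl⟩
    have e1 := LinearMap.congr_fun hk (f₁ y)
    have e2 := LinearMap.congr_fun hh y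
    simp only [LinearMap.comp_apply] at e1 e2
    show f₀ _ = 0
    simp only [LinearMap.sub_apply, LinearMap.comp_apply, map_sub]
    exact sub_eq_zero_of_eq (e1.trans e2)
  obtain ⟨l, hl⟩ := hpres.approx₁ (ModuleCat.of Λ E₁) hpres.mem₁ _ hrange
  have key : ∀ z : Z, k (f₁ (i₁ z)) - f₁ (l (i₁ z)) = i₀ z := by
    intro z
    have h1 := LinearMap.congr_fun hl (i₁ z)
    simp only [LinearMap.comp_apply, LinearMap.sub_apply] at h1
    rw [h1]
    exact (sub_sub_cancel _ _).trans (congrArg _ (hp₁' z))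
  -- the bijective endomorphism killing i₀
  set v : E₀ →ₗ[Λ] E₀ := LinearMap.id + f₁ ∘ₗ (l ∘ₗ (i₁ ∘ₗ p₀)) with hvdef
  have hv : Bijective v := by
    have hb := L (-(l ∘ₗ (i₁ ∘ₗ p₀)))
    have hveq : (LinearMap.id - f₁.comp (-(l ∘ₗ (i₁ ∘ₗ p₀))) : E₀ →ₗ[Λ] E₀) = v := by
      apply LinearMap.ext
      intro x
      simp [hvdef, LinearMap.sub_apply, LinearMap.add_apply, LinearMap.comp_apply,
        LinearMap.neg_apply, sub_neg_eq_add]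
    rwa [hveq] at hb
  set ev : E₀ ≃ₗ[Λ] E₀ := LinearEquiv.ofBijective v hv with hevdef
  have hev : ∀ x : E₀, ev x = v x := fun x => rfl
  set P : E₁ →ₗ[Λ] E₀ := ev.symm.toLinearMap ∘ₗ (k ∘ₗ f₁) with hPdef
  set Q : E₀ →ₗ[Λ] E₁ := i₁ ∘ₗ p₀ with hQdef
  have hQP : Bijective (LinearMap.id - Q.comp P : E₁ →ₗ[Λ] E₁) := by
    have hb := L' ((i₁ ∘ₗ p₀) ∘ₗ (ev.symm.toLinearMap ∘ₗ k))
    have heq : (LinearMap.id - ((i₁ ∘ₗ p₀) ∘ₗ (ev.symm.toLinearMap ∘ₗ k)).comp f₁ : E₁ →ₗ[Λ] E₁)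
        = LinearMap.id - Q.comp P := by
      apply LinearMap.ext
      intro x
      simp [hPdef, hQdef, LinearMap.sub_apply, LinearMap.comp_apply]
    rwa [heq] at hb
  have hPQ : Bijective (LinearMap.id - P.comp Q : E₀ →ₗ[Λ] E₀) :=
    bijective_one_sub_swap Q P hQP
  obtain ⟨z, hz⟩ := exists_ne (0 : Z)
  have hi₀z : i₀ z ≠ 0 := by
    intro hc
    apply hz
    rw [← hp₀' z, hc, map_zero]
  -- F := v ∘ (1 - P∘Q) is bijective but kills i₀ z
  have hF : Bijective (fun x : E₀ => v ((LinearMap.id - P.comp Q : E₀ →ₗ[Λ] E₀) x)) :=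
    hv.comp hPQ
  have hF0 : v ((LinearMap.id - P.comp Q : E₀ →ₗ[Λ] E₀) (i₀ z)) = 0 := by
    have step1 : (LinearMap.id - P.comp Q : E₀ →ₗ[Λ] E₀) (i₀ z) = i₀ z - ev.symm (k (f₁ (i₁ z))) := by
      simp only [LinearMap.sub_apply, LinearMap.comp_apply, LinearMap.id_apply,
        hPdef, hQdef, LinearEquiv.coe_coe]
      exact congrArg (fun w => i₀ z - ev.symm (k (f₁ (i₁ w)))) (hp₀' z)
    rw [step1, map_sub]
    have step2 : v (ev.symm (k (f₁ (i₁ z)))) = k (f₁ (i₁ z)) := by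
      have := ev.apply_symm_apply (k (f₁ (i₁ z)))
      rwa [hev] at this
    have step3 : v (i₀ z) = i₀ z + f₁ (l (i₁ z)) := by
      simp only [hvdef, LinearMap.add_apply, LinearMap.comp_apply, LinearMap.id_apply]
      exact congrArg (fun w => i₀ z + f₁ (l (i₁ w))) (hp₀' z)
    rw [step2, step3]
    have := key z
    rw [← this]
    abel
  have : i₀ z = 0 := by
    apply hF.injective
    show v ((LinearMap.id - P.comp Q : E₀ →ₗ[Λ] E₀) (i₀ z)) = v ((LinearMap.id - P.comp Q : E₀ →ₗ[Λ] E₀) 0)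
    rw [hF0, map_zero, map_zero]
  exact hi₀z this
end
end

section
/- Let Λ be a local finite dimensional algebra over an algebraically closed field. Then every τ-rigid Λ-module is projective; in particular Λ is CM-τ-tilting free. -/
set_option linter.unusedSectionVars false
set_option linter.unusedVariables false
set_option maxHeartbeats 1000000

open Function LinearMap MulOpposite

open Function LinearMap MulOpposite
noncomputable section

open Function LinearMap MulOpposite
noncomputable section

section LDual
/-- The `K`-linear dual of a left `R`-module, regarded as a right `R`-module
(i.e. an `Rᵐᵒᵖ`-module). -/
abbrev LeftDual (K R N : Type) [Field K] [Ring R] [Algebra K R]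
    [AddCommGroup N] [Module K N] [Module R N] [SMulCommClass R K N] : Type := N →ₗ[K] K

variable (K R N : Type) [Field K] [Ring R] [Algebra K R]
  [AddCommGroup N] [Module K N] [Module R N] [SMulCommClass R K N]

variable {R N} in
/-- Left scalar multiplication by `a : R` on `N`, as a `K`-linear map. -/
def smulHom (a : R) : N →ₗ[K] N where
  toFun x := a • x
  map_add' x y := smul_add _ x y
  map_smul' c x := smul_comm a c x

instance : SMul Rᵐᵒᵖ (LeftDual K R N) :=
  ⟨fun a φ => (φ : N →ₗ[K] K).comp (smulHom (K := K) (unop a))⟩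

instance : Module Rᵐᵒᵖ (LeftDual K R N) :=
  Module.ofMinimalAxioms
    (fun a φ ψ => by apply LinearMap.ext; intro x; rfl)
    (fun a b φ => by
      apply LinearMap.ext; intro x
      show φ ((unop (a + b)) • x) = φ (unop a • x) + φ (unop b • x)
      rw [unop_add, add_smul, map_add])
    (fun a b φ => by
      apply LinearMap.ext; intro x
      show φ (unop (a * b) • x) = φ (unop b • unop a • x)
      rw [unop_mul, mul_smul])
    (fun φ => by
      apply LinearMap.ext; intro x
      show φ (unop (1 : Rᵐᵒᵖ) • x) = φ x
      rw [unop_one, one_smul])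

end LDual

/-- The canonical ring homomorphism `R →+* Rᵐᵒᵖᵐᵒᵖ`. -/
def opOpRingHom (R : Type) [Ring R] : R →+* Rᵐᵒᵖᵐᵒᵖ where
  toFun a := op (op a)
  map_one' := rfl
  map_mul' a b := rfl
  map_zero' := rfl
  map_add' a b := rfl

section TauInv
variable (K R : Type) [Field K] [Ring R] [Algebra K R]

/-- `N` is `τ⁻¹`-rigid: `Hom_R(τ⁻¹N, N) = 0`, where `τ⁻¹N = Tr D N` is computed from any
minimal projective presentation over `Rᵐᵒᵖ` of the dual `D N`. -/
def IsTauInvRigid (N : Type) [AddCommGroup N] [Module K N] [Module R N]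
    [SMulCommClass R K N] : Prop :=
  ∀ (Q₁ Q₀ : ModuleCat.{0} Rᵐᵒᵖ) (f : Q₁ →ₗ[Rᵐᵒᵖ] Q₀) (g : Q₀ →ₗ[Rᵐᵒᵖ] LeftDual K R N),
    IsMinimalProjPresentation f g →
      letI : Module R (TransposeOf f) := Module.compHom _ (opOpRingHom R)
      ∀ h : TransposeOf f →ₗ[R] N, h = 0

end TauInv

section DualRing
variable (K R : Type) [Field K] [Ring R] [Algebra K R]

/-- `D R = Hom_K(R, K)`, the `K`-dual of the algebra, as a left `R`-module
(the minimal injective cogenerator `DΛ`). -/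
abbrev DualOfRing : Type := RightDual K R R

/-- `N` is semi-Gorenstein injective : `Ext^i_R(DR, N) = 0` for all `i ≥ 1`, expressed via
exactness of `Hom(DR, -)` applied to any injective coresolution of `N` in positive degrees. -/
def IsSemiGorensteinInjective (N : Type) [AddCommGroup N] [Module R N] : Prop :=
  ∀ c : InjCoresolution R N, ∀ i (φ : DualOfRing K R →ₗ[R] c.I (i + 1)),
    (c.d (i + 1)).comp φ = 0 → ∃ ψ : DualOfRing K R →ₗ[R] c.I i, φ = (c.d i).comp ψ

/-- `N` is Gorenstein injective: a cosyzygy of a complete exact sequence of injectives which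
stays exact under `Hom_R(DR, -)`. -/
def IsGorensteinInjective (N : Type) [AddCommGroup N] [Module R N] : Prop :=
  ∃ (I : ℤ → ModuleCat.{0} R) (d : ∀ i, I i →ₗ[R] I (i + 1)),
    (∀ i, Module.Injective R (I i)) ∧
    (∀ i, LinearMap.range (d i) = LinearMap.ker (d (i + 1))) ∧
    (∀ i (φ : DualOfRing K R →ₗ[R] I (i + 1)), (d (i + 1)).comp φ = 0 →
      ∃ ψ : DualOfRing K R →ₗ[R] I i, φ = (d i).comp ψ) ∧
    Nonempty (N ≃ₗ[R] LinearMap.range (d 0))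

/-- `Λ` is CM-τ-tilting free: every finitely generated Gorenstein projective τ-rigid module
is projective. -/
def IsCMTauTiltingFree : Prop :=
  ∀ (M : ModuleCat.{0} R), Module.Finite R M → IsGorensteinProjective R M →
    IsTauRigid K R M → Module.Projective R M

/-- Vanishing of `Ext¹_R(T, T)`: every short exact sequence `0 → T → X → T → 0` splits. -/
def Ext1SelfVanishes (T : Type) [AddCommGroup T] [Module R T] : Prop :=
  ∀ (X : ModuleCat.{0} R) (i : T →ₗ[R] X) (p : X →ₗ[R] T),
    Injective i → Surjective p → LinearMap.range i = LinearMap.ker p →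
      ∃ r : X →ₗ[R] T, r.comp i = LinearMap.id

/-- `T` is a (classical) tilting module of projective dimension at most 1. -/
def IsTiltingModule (T : Type) [AddCommGroup T] [Module R T] : Prop :=
  ProjDimLE R T 1 ∧ Ext1SelfVanishes R T ∧
    ∃ (T₀ T₁ : ModuleCat.{0} R) (u : R →ₗ[R] T₀) (v : T₀ →ₗ[R] T₁),
      IsInAdd R T T₀ ∧ IsInAdd R T T₁ ∧ Injective u ∧ Surjective v ∧
        LinearMap.range u = LinearMap.ker v

end DualRing

/-!
Over a local algebra with `Λ = K ⊕ rad Λ` (this is where algebraic closedness enters), the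
`K`-linear map `M ↠ top M ↠ K ↪ soc (τM) ⊆ τM` is `Λ`-linear for any choice of the two
`K`-linear maps. Take a minimal presentation `P₁ → P₀ → M`; its image lies in `rad P₀`, so the
image of `Hom(P₀, Λ) → Hom(P₁, Λ)` lies in the radical and `Tr M` has a nonzero top as soon as
`P₁ ≠ 0`, i.e. as soon as `M` is not projective. Dually `τM = D Tr M` has a nonzero socle, and the
composite above is a nonzero map `M → τM`.
-/

open Submodule

section LocalRing
variable {R : Type} [Ring R] [IsLocalRing R]

instance IsLocalRing.isDedekindFiniteMonoid : IsDedekindFiniteMonoid R where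
  mul_eq_one_symm {a b} hab := by
    have hidem : b * a * (b * a) = b * a * 1 := by
      rw [mul_one, mul_assoc, ← mul_assoc a, hab, one_mul]
    rcases IsLocalRing.isUnit_or_isUnit_of_add_one (add_sub_cancel (b * a) 1) with hu | hu
    · exact hu.mul_left_cancel hidem
    · have ha : a * (1 - b * a) = 0 := by
        rw [mul_sub, mul_one, ← mul_assoc, hab, one_mul, sub_self]
      rw [hu.mul_left_eq_zero.mp ha, zero_mul] at hab
      exact absurd hab zero_ne_one

theorem IsLocalRing.mem_jacobson_of_not_isUnit {a : R} (ha : ¬IsUnit a) : a ∈ Ring.jacobson R := by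
  rw [← Ideal.jacobson_bot, Ideal.mem_jacobson_iff]
  intro y
  have hya : ¬IsUnit (-(y * a)) := fun h =>
    ha (isUnit_of_mul_isUnit_right ((IsUnit.neg_iff _).mp h))
  have hu : IsUnit (y * a + 1) :=
    (IsLocalRing.isUnit_or_isUnit_of_add_one (neg_add_cancel_left (y * a) 1)).resolve_left hya
  exact ⟨↑hu.unit⁻¹, by rw [mul_assoc, ← mul_add_one, hu.val_inv_mul, sub_self]; exact zero_mem _⟩

end LocalRing

theorem exists_algebraMap_sub_mem_jacobson (K : Type) {Λ : Type} [Field K] [IsAlgClosed K]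
    [Ring Λ] [Algebra K Λ] [FiniteDimensional K Λ] [IsLocalRing Λ] (a : Λ) :
    ∃ c : K, a - algebraMap K Λ c ∈ Ring.jacobson Λ := by
  obtain ⟨c, hc⟩ := spectrum.nonempty_of_isAlgClosed_of_finiteDimensional K a
  refine ⟨c, IsLocalRing.mem_jacobson_of_not_isUnit fun h => spectrum.mem_iff.mp hc ?_⟩
  rw [← neg_sub]
  exact h.neg

section Presentation
variable {R : Type} [Ring R]

theorem Pi.mem_ideal_smul_top {ι : Type} [Fintype ι] {I : Ideal R} {c : ι → R}
    (hc : ∀ i, c i ∈ I) : c ∈ I • (⊤ : Submodule R (ι → R)) := by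
  classical
  rw [← Finset.univ_sum_single c]
  refine sum_mem fun i _ => ?_
  rw [← mul_one (c i), ← smul_eq_mul, Pi.single_smul']
  exact smul_mem_smul (hc i) mem_top

theorem isSuperfluous_of_le_jacobson_smul {P : Type} [AddCommGroup P] [Module R P]
    [Module.Finite R P] {N : Submodule R P} (hN : N ≤ Ring.jacobson R • ⊤) :
    IsSuperfluous R N := by
  intro N' hN'
  have hle : (⊤ : Submodule R (P ⧸ N')) ≤ Ring.jacobson R • ⊤ := calc
    ⊤ = map N'.mkQ (N ⊔ N') := by rw [hN', Submodule.map_top, range_mkQ]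
    _ = map N'.mkQ N := by rw [Submodule.map_sup, mkQ_map_self, sup_bot_eq]
    _ ≤ map N'.mkQ (Ring.jacobson R • ⊤) := map_mono hN
    _ = Ring.jacobson R • ⊤ := by rw [map_smul'', Submodule.map_top, range_mkQ]
  exact Submodule.Quotient.subsingleton_iff.mp <| (Submodule.subsingleton_iff R).mp <|
    subsingleton_of_bot_eq_top (FG.eq_bot_of_le_jacobson_smul Module.Finite.fg_top hle).symm

theorem LinearMap.apply_mem_of_mem_ideal_smul_top {R P : Type} [Ring R] [AddCommGroup P]
    [Module R P] {I : Ideal R} [I.IsTwoSided] (ψ : P →ₗ[R] R) {x : P}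
    (hx : x ∈ I • (⊤ : Submodule R P)) : ψ x ∈ I := by
  refine (smul_le.mpr fun r hr n _ => ?_ : I • ⊤ ≤ Submodule.comap ψ I) hx
  rw [mem_comap, map_smul, smul_eq_mul]
  exact Ideal.mul_mem_right _ _ hr

variable [IsLocalRing R]

/-- A generating set of minimal size admits no relation with a unit coefficient, since such a
relation would express one generator through the others. -/
theorem exists_finset_span_eq_top_ker_le_jacobson_smul (N : Type) [AddCommGroup N] [Module R N]
    [Module.Finite R N] :
    ∃ s : Finset N, span R (s : Set N) = ⊤ ∧
      ker (Fintype.linearCombination R ((↑) : s → N)) ≤ Ring.jacobson R • ⊤ := by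
  classical
  obtain ⟨s₀, hs₀⟩ := (Module.Finite.fg_top : (⊤ : Submodule R N).FG)
  obtain ⟨s, hs, hmin⟩ :=
    (measure Finset.card).wf.has_min {s : Finset N | span R (s : Set N) = ⊤} ⟨s₀, hs₀⟩
  refine ⟨s, hs, fun c hc => Pi.mem_ideal_smul_top fun i =>
    IsLocalRing.mem_jacobson_of_not_isUnit fun hu => ?_⟩
  have hi : (i : N) ∈ span R ((s.erase i : Finset N) : Set N) := by
    rw [← Quotient.mk_eq_zero, ← hu.smul_eq_zero]
    have hrel := congrArg (span R ((s.erase i : Finset N) : Set N)).mkQ (mem_ker.mp hc)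
    simp only [Fintype.linearCombination_apply, map_sum, map_smul, mkQ_apply, map_zero] at hrel
    rwa [Finset.sum_eq_single i (fun j _ hji => ?_) (by simp)] at hrel
    rw [(Quotient.mk_eq_zero _).mpr (subset_span (Finset.mem_erase.mpr
      ⟨fun h => hji (Subtype.ext h), j.2⟩)), smul_zero]
  refine hmin (s.erase i) ?_ (Finset.card_erase_lt_of_mem i.2)
  show span R _ = ⊤
  rw [← hs, ← span_insert_eq_span hi, Finset.coe_erase, Set.insert_sdiff_singleton,
    Set.insert_eq_of_mem i.2]

theorem exists_isMinimalProjPresentation [IsNoetherianRing R] (M : Type) [AddCommGroup M]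
    [Module R M] [Module.Finite R M] :
    ∃ (ι κ : Type) (_ : Fintype ι) (_ : Fintype κ) (f : (κ → R) →ₗ[R] ι → R)
      (g : (ι → R) →ₗ[R] M), IsMinimalProjPresentation f g ∧ range f ≤ Ring.jacobson R • ⊤ := by
  obtain ⟨s, hs, hgker⟩ := exists_finset_span_eq_top_ker_le_jacobson_smul (R := R) M
  set g := Fintype.linearCombination R ((↑) : s → M)
  obtain ⟨t, ht, hhker⟩ := exists_finset_span_eq_top_ker_le_jacobson_smul (R := R) (ker g)
  set h := Fintype.linearCombination R ((↑) : t → ker g)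
  have hrange : range ((ker g).subtype ∘ₗ h) = ker g := by
    rw [range_comp, Fintype.range_linearCombination, Subtype.range_coe, ht, Submodule.map_top,
      range_subtype]
  refine ⟨s, t, inferInstance, inferInstance, (ker g).subtype ∘ₗ h, g,
    ⟨inferInstance, inferInstance, inferInstance, inferInstance, ?_, hrange,
      isSuperfluous_of_le_jacobson_smul hgker, ?_⟩, hrange.trans_le hgker⟩
  · rw [← range_eq_top, Fintype.range_linearCombination, Subtype.range_coe, hs]
  · rw [ker_comp, ker_subtype, comap_bot]
    exact isSuperfluous_of_le_jacobson_smul hhker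

end Presentation

instance {K R N : Type} [Field K] [Ring R] [Algebra K R] [AddCommGroup N] [Module K N]
    [Module Rᵐᵒᵖ N] [SMulCommClass Rᵐᵒᵖ K N] [IsScalarTower K Rᵐᵒᵖ N] :
    IsScalarTower K R (RightDual K R N) where
  smul_assoc c a φ := LinearMap.ext fun x =>
    show φ (op (c • a) • x) = c • φ (op a • x) by rw [op_smul, smul_assoc, map_smul]

instance {K R N : Type} [Field K] [Ring R] [Algebra K R] [AddCommGroup N] [Module K N]
    [Module Rᵐᵒᵖ N] [SMulCommClass Rᵐᵒᵖ K N] :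
    SMulCommClass R K (RightDual K R N) where
  smul_comm _ _ _ := rfl

theorem exists_dual_ne_zero_jacobson_smul_le_ker (K : Type) {R M : Type} [Field K] [Ring R]
    [Algebra K R] [AddCommGroup M] [Module R M] [Module K M] [IsScalarTower K R M]
    [Module.Finite R M] [Nontrivial M] :
    ∃ ℓ : M →ₗ[K] K, ℓ ≠ 0 ∧ (Ring.jacobson R • ⊤ : Submodule R M).restrictScalars K ≤ ker ℓ :=
  exists_le_ker_of_lt_top _ <| lt_top_iff_ne_top.mpr fun h =>
    (FG.jacobson_smul_lt top_ne_bot Module.Finite.fg_top).ne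
      ((restrictScalars_eq_top_iff K R M).mp h)

theorem exists_linearMap_apply_eq_smul {K R M N : Type} [CommRing K] [Ring R] [Algebra K R]
    [AddCommGroup M] [Module R M] [Module K M] [IsScalarTower K R M]
    [AddCommGroup N] [Module R N] [Module K N] [IsScalarTower K R N] [SMulCommClass R K N]
    {I : Ideal R} (hI : ∀ a : R, ∃ c : K, a - algebraMap K R c ∈ I) {ℓ : M →ₗ[K] K}
    (hℓ : (I • ⊤ : Submodule R M).restrictScalars K ≤ ker ℓ) {v : N} (hv : ∀ a ∈ I, a • v = 0) :
    ∃ h : M →ₗ[R] N, ∀ z, h z = ℓ z • v := by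
  refine ⟨
    { toFun := fun z => ℓ z • v
      map_add' := fun z w => by rw [map_add, add_smul]
      map_smul' := fun a z => ?_ }, fun _ => rfl⟩
  obtain ⟨c, hc⟩ := hI a
  have hav : a • v = c • v := by
    rw [← sub_add_cancel a (algebraMap K R c), add_smul, hv _ hc, zero_add, algebraMap_smul]
  have hj : (a - algebraMap K R c) • z ∈ ker ℓ :=
    hℓ ((restrictScalars_mem K _ _).mpr (smul_mem_smul hc mem_top))
  have haz : ℓ (a • z) = c • ℓ z := by
    rw [← sub_add_cancel a (algebraMap K R c), add_smul, map_add, mem_ker.mp hj, zero_add,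
      algebraMap_smul, map_smul]
  show ℓ (a • z) • v = a • ℓ z • v
  rw [haz, smul_comm a (ℓ z) v, hav, smul_smul, smul_eq_mul, mul_comm]

theorem exists_tauOf_ne_zero_jacobson_smul_eq_zero (K : Type) {Λ P₁ P₀ : Type} [Field K] [Ring Λ]
    [Algebra K Λ] [AddCommGroup P₁] [AddCommGroup P₀] [Module Λ P₁] [Module Λ P₀]
    [Module.Free Λ P₁] [Nontrivial P₁] {f : P₁ →ₗ[Λ] P₀} (hf : range f ≤ Ring.jacobson Λ • ⊤) :
    ∃ η : TauOf K Λ f, η ≠ 0 ∧ ∀ a ∈ Ring.jacobson Λ, a • η = 0 := by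
  have : Nontrivial Λ := Module.nontrivial Λ P₁
  obtain ⟨ℓ, hℓ1, hℓJ⟩ := exists_le_ker_of_notMem (p := (Ring.jacobson Λ).restrictScalars K)
    (v := 1) fun h => (Ring.jacobson_lt_top Λ).ne ((Ideal.eq_top_iff_one _).mpr h)
  let b := Module.Free.chooseBasis Λ P₁
  obtain ⟨i⟩ := b.index_nonempty
  let η : (P₁ →ₗ[Λ] Λ) →ₗ[K] K := ℓ ∘ₗ LinearMap.applyₗ' K (b i)
  have hp : (range (transposeHomMap f)).restrictScalars K ≤ ker η := by
    rintro _ ⟨ψ, rfl⟩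
    exact hℓJ (ψ.apply_mem_of_mem_ideal_smul_top (hf (mem_range_self f (b i))))
  let ηb : TauOf K Λ f := ((range (transposeHomMap f)).restrictScalars K).liftQ η hp ∘ₗ
    (Quotient.restrictScalarsEquiv K _).symm.toLinearMap
  have hηb (φ : P₁ →ₗ[Λ] Λ) : ηb (Submodule.Quotient.mk φ) = ℓ (φ (b i)) := by
    simp [ηb, η]
  refine ⟨ηb, fun h => hℓ1 ?_, fun a ha => LinearMap.ext fun t => ?_⟩
  · simpa [hηb] using DFunLike.congr_fun h (Submodule.Quotient.mk (b.coord i))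
  · obtain ⟨φ, rfl⟩ := Submodule.Quotient.mk_surjective _ t
    show ηb (op a • Submodule.Quotient.mk φ) = 0
    rw [← Submodule.Quotient.mk_smul, hηb]
    exact hℓJ (Ideal.mul_mem_left _ (φ (b i)) ha)

theorem Module.projective_of_isTauRigid (K : Type) {Λ : Type} [Field K] [IsAlgClosed K] [Ring Λ]
    [Algebra K Λ] [FiniteDimensional K Λ] [IsLocalRing Λ] (M : Type) [AddCommGroup M]
    [Module Λ M] [Module.Finite Λ M] (hM : IsTauRigid K Λ M) : Module.Projective Λ M := by
  have : IsNoetherianRing Λ := isNoetherian_of_tower K inferInstance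
  obtain ⟨ι, κ, _, _, f, g, hfg, hf⟩ := exists_isMinimalProjPresentation (R := Λ) M
  by_cases hP₁ : Subsingleton (κ → Λ)
  · have hg : ker g = ⊥ := by rw [← hfg.exact, range_eq_bot, Subsingleton.elim f 0]
    exact .of_equiv (LinearEquiv.ofBijective g ⟨ker_eq_bot.mp hg, hfg.surjective⟩)
  by_cases hM₀ : Subsingleton M
  · have := Module.Free.of_subsingleton Λ M
    infer_instance
  rw [not_subsingleton_iff_nontrivial] at hP₁ hM₀
  let _ : Module K M := Module.compHom M (algebraMap K Λ)
  have : IsScalarTower K Λ M := IsScalarTower.of_compHom K Λ M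
  obtain ⟨ℓ, hℓ, hℓJ⟩ := exists_dual_ne_zero_jacobson_smul_le_ker K (R := Λ) (M := M)
  obtain ⟨η, hη, hηJ⟩ := exists_tauOf_ne_zero_jacobson_smul_eq_zero K hf
  obtain ⟨h, hh⟩ := exists_linearMap_apply_eq_smul (N := TauOf K Λ f)
    (exists_algebraMap_sub_mem_jacobson K) hℓJ hηJ
  obtain ⟨z, hz⟩ := DFunLike.ne_iff.mp hℓ
  have hτ := hM (ModuleCat.of Λ (κ → Λ)) (ModuleCat.of Λ (ι → Λ)) f g hfg h
  exact (hη ((smul_eq_zero.mp (by rw [← hh z, hτ, LinearMap.zero_apply])).resolve_left hz)).elim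

variable (K : Type) [Field K] [IsAlgClosed K]
variable (Λ : Type) [Ring Λ] [Algebra K Λ] [FiniteDimensional K Λ]

theorem stmt17 [IsLocalRing Λ] :
    (∀ (M : ModuleCat.{0} Λ), Module.Finite Λ M → IsTauRigid K Λ M →
      Module.Projective Λ M) ∧ IsCMTauTiltingFree K Λ :=
  ⟨fun M _ hM => Module.projective_of_isTauRigid K M hM,
    fun M _ _ hM => Module.projective_of_isTauRigid K M hM⟩
end
end
end
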